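/- arXiv:math/0610057 — 4 statements merged into one kernel-verified Lean document; each statement's English description precedes it below -/
import Mathlib

section
/- Define g(a) = log(Γ(2a-1)/Γ(a)²) for a > 1/2. Then g admits the integral representation g(a) = ∫_0^∞ (e^{-t}/(t(1-e^{-t}))) · (1 - e^{-(a-1)t})² dt for a ≥ 1. -/
open MeasureTheory Set Real Filter Nat Topology


lemma inner_int {t : ℝ} (ht : 0 < t) {x y : ℝ} (hyx : y ≤ x) :
    ∫ s in Ioc y x, Real.exp (-(s * t)) = (Real.exp (-(y * t)) - Real.exp (-(x * t))) / t := by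
  rw [← intervalIntegral.integral_of_le hyx]
  have hder : ∀ s ∈ uIcc y x, HasDerivAt (fun s => -(Real.exp (-(s * t)) / t))
      (Real.exp (-(s * t))) s := by
    intro s _
    have h1 : HasDerivAt (fun s : ℝ => -(s * t)) (-t) s := by
      have := ((hasDerivAt_id s).mul_const t).neg
      simp only [id, one_mul] at this
      exact this
    have h2 := (h1.exp.div_const t).neg
    convert h2 using 1
    · rfl
    · rfl
    · rfl
    · field_simp
  rw [intervalIntegral.integral_eq_sub_of_hasDerivAt hder
    ((Real.continuous_exp.comp (by continuity)).intervalIntegrable y x)]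
  ring

lemma frullani {x y : ℝ} (hy : 0 < y) (hyx : y ≤ x) :
    IntegrableOn (fun t => (Real.exp (-(y * t)) - Real.exp (-(x * t))) / t) (Ioi 0) ∧
    ∫ t in Ioi (0:ℝ), (Real.exp (-(y * t)) - Real.exp (-(x * t))) / t
      = Real.log x - Real.log y := by
  set μ := volume.restrict (Ioi (0:ℝ)) with hμ
  set ν := volume.restrict (Ioc y x) with hν
  have hprod : μ.prod ν = (volume.prod volume).restrict ((Ioi (0:ℝ)) ×ˢ (Ioc y x)) :=
    Measure.prod_restrict _ _
  have hk : Integrable (Function.uncurry fun t s => Real.exp (-(s * t))) (μ.prod ν) := by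
    refine Integrable.mono' (g := fun p : ℝ × ℝ => Real.exp (-y * p.1)) ?_ ?_ ?_
    · have h1 : Integrable (fun t : ℝ => Real.exp (-y * t)) μ := exp_neg_integrableOn_Ioi 0 hy
      have h2 : Integrable (fun _ : ℝ => (1:ℝ)) ν :=
        integrableOn_const measure_Ioc_lt_top.ne
      simpa using h1.mul_prod h2
    · exact (Real.continuous_exp.comp (by continuity)).aestronglyMeasurable
    · rw [hprod]
      filter_upwards [ae_restrict_mem (measurableSet_Ioi.prod measurableSet_Ioc)] with p hp
      have h1 : 0 < p.1 := hp.1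
      have h2 : y ≤ p.2 := hp.2.1.le
      simp only [Function.uncurry, Real.norm_eq_abs, abs_of_pos (Real.exp_pos _)]
      exact Real.exp_le_exp.2 (by nlinarith)
  have hswap := integral_integral_swap hk
  have hinner : ∀ t ∈ Ioi (0:ℝ),
      (∫ s, Real.exp (-(s * t)) ∂ν) = (Real.exp (-(y * t)) - Real.exp (-(x * t))) / t :=
    fun t ht => inner_int ht hyx
  have hint : IntegrableOn (fun t => (Real.exp (-(y * t)) - Real.exp (-(x * t))) / t) (Ioi 0) := by
    refine (hk.integral_prod_left).congr ?_
    rw [hμ, EventuallyEq, ae_restrict_iff' measurableSet_Ioi]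
    refine Eventually.of_forall fun t ht => ?_
    simpa using hinner t ht
  refine ⟨hint, ?_⟩
  have hleft : (∫ t, ∫ s, Real.exp (-(s * t)) ∂ν ∂μ)
      = ∫ t in Ioi (0:ℝ), (Real.exp (-(y * t)) - Real.exp (-(x * t))) / t :=
    setIntegral_congr_fun measurableSet_Ioi hinner
  have hright : (∫ s, ∫ t, Real.exp (-(s * t)) ∂μ ∂ν) = Real.log x - Real.log y := by
    have hval : ∀ s ∈ Ioc y x, (∫ t, Real.exp (-(s * t)) ∂μ) = 1 / s := by
      intro s hs
      have hs0 : 0 < s := lt_of_lt_of_le hy hs.1.le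
      rw [hμ]
      have := integral_comp_mul_left_Ioi (fun u => Real.exp (-u)) 0 hs0
      simp only [mul_zero, integral_exp_neg_Ioi, neg_zero, Real.exp_zero, smul_eq_mul,
        mul_one] at this
      rw [this, one_div]
    rw [hν, setIntegral_congr_fun measurableSet_Ioc hval, ← intervalIntegral.integral_of_le hyx,
      integral_one_div, Real.log_div (by linarith : (0:ℝ) < x).ne' hy.ne']
    rw [Set.uIcc_of_le hyx]
    intro h0
    exact absurd (mem_Icc.1 h0).1 (by linarith)
  rw [← hleft, hswap, hright]

lemma sum_log_factorial (n : ℕ) :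
    ∑ m ∈ Finset.range n, Real.log (1 + (m : ℝ)) = Real.log (n ! : ℝ) := by
  induction n with
  | zero => simp
  | succ n ih =>
      rw [Finset.sum_range_succ, ih,
        ← Real.log_mul (by exact_mod_cast (Nat.factorial_pos n).ne') (by positivity)]
      congr 1
      push_cast [Nat.factorial_succ]
      ring

lemma majorant_integrable :
    IntegrableOn (fun t : ℝ => Real.exp (-t) * (1 + t)) (Ioi 0) := by
  have i1 : IntegrableOn (fun t : ℝ => Real.exp (-t)) (Ioi 0) := by
    have := Real.GammaIntegral_convergent (s := 1) one_pos
    simpa using this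
  have i2 : IntegrableOn (fun t : ℝ => Real.exp (-t) * t) (Ioi 0) := by
    have := Real.GammaIntegral_convergent (s := 2) (by norm_num)
    have h21 : ((2:ℝ) - 1) = 1 := by norm_num
    rw [h21] at this
    simpa [Real.rpow_one] using this
  have h := i1.add i2
  have : (fun t : ℝ => Real.exp (-t) * (1 + t)) = (fun t : ℝ => Real.exp (-t)) + fun t => Real.exp (-t) * t := by
    funext t; simp; ring
  rw [this]; exact h

set_option maxHeartbeats 1000000 in
/-- For `a ≥ 1`, the function `g(a) = log(Γ(2a-1)/Γ(a)²)` admits the integral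
representation `g(a) = ∫_0^∞ e^{-t}/(t(1-e^{-t})) · (1-e^{-(a-1)t})² dt`. -/
theorem log_gamma_ratio_integral_repr (a : ℝ) (ha : 1 ≤ a) :
    Real.log (Real.Gamma (2 * a - 1) / Real.Gamma a ^ 2)
      = ∫ t in Ioi (0 : ℝ),
          Real.exp (-t) / (t * (1 - Real.exp (-t))) * (1 - Real.exp (-(a - 1) * t)) ^ 2 := by
  have ha0 : 0 < a := by linarith
  have h2a : 0 < 2 * a - 1 := by linarith
  set h : ℝ → ℝ := fun t =>
    Real.exp (-t) / (t * (1 - Real.exp (-t))) * (1 - Real.exp (-(a - 1) * t)) ^ 2 with hh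
  set Phi : ℕ → ℝ → ℝ := fun m t =>
    Real.exp (-((1 + (m : ℝ)) * t)) * (1 - Real.exp (-(a - 1) * t)) ^ 2 / t with hPhi
  -- pointwise identity for Phi
  have hphi_eq : ∀ (m : ℕ) (t : ℝ), Phi m t =
      (Real.exp (-((1 + (m : ℝ)) * t)) - Real.exp (-((a + m) * t))) / t
        - (Real.exp (-((a + m) * t)) - Real.exp (-((2 * a - 1 + m) * t))) / t := by
    intro m t
    have e1 : Real.exp (-((1 + (m : ℝ)) * t)) * Real.exp (-(a - 1) * t)
        = Real.exp (-((a + m) * t)) := by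
      rw [← Real.exp_add]; congr 1; ring
    have e2 : Real.exp (-((1 + (m : ℝ)) * t)) * (Real.exp (-(a - 1) * t)
        * Real.exp (-(a - 1) * t)) = Real.exp (-((2 * a - 1 + m) * t)) := by
      rw [← Real.exp_add, ← Real.exp_add]; congr 1; ring
    simp only [hPhi]
    rw [← e1, ← e2]
    ring
  have hm1 : ∀ m : ℕ, (0:ℝ) < 1 + m := fun m => by positivity
  have hm2 : ∀ m : ℕ, (1:ℝ) + m ≤ a + m := fun m => by
    have : (0:ℝ) ≤ m := m.cast_nonneg; linarith
  have hm3 : ∀ m : ℕ, (a:ℝ) + m ≤ 2 * a - 1 + m := fun m => by linarith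
  have hm4 : ∀ m : ℕ, (0:ℝ) < a + m := fun m => lt_of_lt_of_le (hm1 m) (hm2 m)
  have hphi_int : ∀ m : ℕ, IntegrableOn (Phi m) (Ioi 0) := by
    intro m
    have h1 := (frullani (hm1 m) (hm2 m)).1
    have h2 := (frullani (hm4 m) (hm3 m)).1
    have := h1.sub h2
    refine this.congr (Eventually.of_forall fun t => (hphi_eq m t).symm)
  have hphi_val : ∀ m : ℕ, ∫ t in Ioi (0:ℝ), Phi m t
      = 2 * Real.log (a + m) - Real.log (2 * a - 1 + m) - Real.log (1 + m) := by
    intro m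
    have h1 := frullani (hm1 m) (hm2 m)
    have h2 := frullani (hm4 m) (hm3 m)
    rw [show (fun t => Phi m t) = fun t => ((Real.exp (-((1 + (m : ℝ)) * t))
        - Real.exp (-((a + m) * t))) / t
        - (Real.exp (-((a + m) * t)) - Real.exp (-((2 * a - 1 + m) * t))) / t) from
      funext fun t => hphi_eq m t]
    rw [integral_sub h1.1 h2.1, h1.2, h2.2]
    ring
  set f : ℕ → ℝ → ℝ := fun n t => ∑ m ∈ Finset.range (n + 1), Phi m t with hf
  have hf_int : ∀ n, Integrable (f n) (volume.restrict (Ioi 0)) := by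
    intro n
    simp only [hf]
    exact integrable_finset_sum _ fun m _ => hphi_int m
  have hf_val : ∀ n, ∫ t in Ioi (0:ℝ), f n t
      = ∑ m ∈ Finset.range (n + 1),
          (2 * Real.log (a + m) - Real.log (2 * a - 1 + m) - Real.log (1 + m)) := by
    intro n
    simp only [hf]
    rw [integral_finset_sum _ fun m _ => hphi_int m]
    exact Finset.sum_congr rfl fun m _ => hphi_val m
  have hr1 : ∀ t : ℝ, 0 < t → Real.exp (-t) < 1 := by
    intro t ht
    have := Real.exp_lt_exp.2 (show -t < 0 by linarith)
    simpa using this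
  have hf_eq : ∀ n : ℕ, ∀ t ∈ Ioi (0:ℝ), f n t = h t * (1 - Real.exp (-t) ^ (n + 1)) := by
    intro n t ht
    have ht0 : (0:ℝ) < t := ht
    have hrlt : Real.exp (-t) < 1 := hr1 t ht0
    have hrne : Real.exp (-t) ≠ 1 := ne_of_lt hrlt
    have hexp : ∀ m : ℕ, Real.exp (-((1 + (m:ℝ)) * t)) = Real.exp (-t) ^ (m + 1) := by
      intro m
      rw [← Real.exp_nat_mul]
      congr 1
      push_cast
      ring
    have hsum : ∑ m ∈ Finset.range (n + 1), Real.exp (-t) ^ (m + 1)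
        = Real.exp (-t) * (1 - Real.exp (-t) ^ (n + 1)) / (1 - Real.exp (-t)) := by
      have hgeom := geom_sum_eq hrne (n + 1)
      have h1 : ∑ m ∈ Finset.range (n + 1), Real.exp (-t) ^ (m + 1)
          = Real.exp (-t) * ∑ m ∈ Finset.range (n + 1), Real.exp (-t) ^ m := by
        rw [Finset.mul_sum]
        exact Finset.sum_congr rfl fun m _ => by ring
      rw [h1, hgeom]
      have hne : Real.exp (-t) - 1 ≠ 0 := sub_ne_zero.2 hrne
      have hne' : (1:ℝ) - Real.exp (-t) ≠ 0 := sub_ne_zero.2 (ne_of_lt hrlt).symm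
      field_simp
      ring
    simp only [hf, hh, hPhi, hexp]
    rw [← Finset.sum_div, ← Finset.sum_mul, hsum]
    have hne' : (1:ℝ) - Real.exp (-t) ≠ 0 := sub_ne_zero.2 (ne_of_lt hrlt).symm
    field_simp
  have hh_int : IntegrableOn h (Ioi 0) := by
    refine Integrable.mono' (majorant_integrable.const_mul ((a-1)^2)) ?_ ?_
    · simp only [hh]
      have m1 : Measurable fun t : ℝ => Real.exp (-t) :=
        Real.measurable_exp.comp measurable_neg
      have m3 : Measurable fun t : ℝ => Real.exp (-(a - 1) * t) :=
        Real.measurable_exp.comp (measurable_id.const_mul _)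
      exact ((m1.div (measurable_id.mul (measurable_const.sub m1))).mul
        ((measurable_const.sub m3).pow_const 2)).aestronglyMeasurable
    · filter_upwards [ae_restrict_mem measurableSet_Ioi] with t ht
      have ht0 : (0:ℝ) < t := ht
      have hrlt : Real.exp (-t) < 1 := hr1 t ht0
      have hA : 1 - Real.exp (-(a - 1) * t) ≤ (a - 1) * t := by
        have := Real.add_one_le_exp (-(a - 1) * t)
        linarith
      have hB : 0 ≤ 1 - Real.exp (-(a - 1) * t) := by
        have h0 : -(a - 1) * t ≤ 0 := by nlinarith
        have := Real.exp_le_exp.2 h0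
        simp only [Real.exp_zero] at this
        linarith
      have hq : (1 - Real.exp (-(a - 1) * t)) ^ 2 ≤ ((a - 1) * t) ^ 2 :=
        pow_le_pow_left₀ hB hA 2
      have hCexp : Real.exp (-t) ≤ (1 + t)⁻¹ := by
        rw [Real.exp_neg]
        exact inv_anti₀ (by linarith) (by linarith [Real.add_one_le_exp t])
      have hC : t / (1 + t) ≤ 1 - Real.exp (-t) := by
        have hid : (1:ℝ) - (1 + t)⁻¹ = t / (1 + t) := by
          field_simp
          ring
        linarith [hid ▸ (by linarith [hCexp] : t / (1+t) ≤ 1 - Real.exp (-t))]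
      have hDpos : 0 < t * (1 - Real.exp (-t)) := mul_pos ht0 (by linarith)
      have hDpos' : 0 < t * (t / (1 + t)) := by positivity
      have hDle : t * (t / (1 + t)) ≤ t * (1 - Real.exp (-t)) :=
        mul_le_mul_of_nonneg_left hC ht0.le
      have hnorm : ‖h t‖ = h t := by
        rw [Real.norm_eq_abs, abs_of_nonneg]
        simp only [hh]
        exact mul_nonneg (div_nonneg (Real.exp_pos _).le hDpos.le) (sq_nonneg _)
      rw [hnorm]
      have hform : h t = Real.exp (-t) * (1 - Real.exp (-(a - 1) * t)) ^ 2
          / (t * (1 - Real.exp (-t))) := by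
        simp only [hh]
        ring
      rw [hform]
      calc Real.exp (-t) * (1 - Real.exp (-(a - 1) * t)) ^ 2 / (t * (1 - Real.exp (-t)))
          ≤ Real.exp (-t) * ((a - 1) * t) ^ 2 / (t * (t / (1 + t))) := by
            refine div_le_div₀ (by positivity) ?_ hDpos' hDle
            exact mul_le_mul_of_nonneg_left hq (Real.exp_pos _).le
        _ = (a - 1) ^ 2 * (Real.exp (-t) * (1 + t)) := by
            field_simp
  have hmct : Tendsto (fun n => ∫ t in Ioi (0:ℝ), f n t) atTop
      (𝓝 (∫ t in Ioi (0:ℝ), h t)) := by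
    refine integral_tendsto_of_tendsto_of_monotone hf_int hh_int ?_ ?_
    · filter_upwards [ae_restrict_mem measurableSet_Ioi] with t ht
      refine monotone_nat_of_le_succ fun n => ?_
      simp only [hf]
      rw [Finset.sum_range_succ _ (n + 1)]
      have hpos : 0 ≤ Phi (n + 1) t := by
        simp only [hPhi]
        have ht0 : (0:ℝ) < t := ht
        positivity
      linarith
    · filter_upwards [ae_restrict_mem measurableSet_Ioi] with t ht
      have heq : ∀ n, f n t = h t * (1 - Real.exp (-t) ^ (n + 1)) := fun n => hf_eq n t ht
      have hpow : Tendsto (fun n : ℕ => Real.exp (-t) ^ (n + 1)) atTop (𝓝 0) :=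
        (tendsto_pow_atTop_nhds_zero_of_lt_one (Real.exp_pos _).le (hr1 t ht)).comp
          (tendsto_add_atTop_nat 1)
      have h2 : Tendsto (fun n : ℕ => h t * (1 - Real.exp (-t) ^ (n + 1))) atTop
          (𝓝 (h t * (1 - 0))) :=
        (tendsto_const_nhds (x := h t)).mul
          ((tendsto_const_nhds (x := (1:ℝ))).sub hpow)
      refine Tendsto.congr (fun n => (heq n).symm) ?_
      simpa using h2
  have hIn : ∀ n : ℕ, ∫ t in Ioi (0:ℝ), f n t
      = (Real.BohrMollerup.logGammaSeq (2 * a - 1) n - 2 * Real.BohrMollerup.logGammaSeq a n)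
        - (Real.log ((n:ℝ) + 1) - Real.log (n:ℝ)) := by
    intro n
    rw [hf_val n]
    have hsplit : ∑ m ∈ Finset.range (n + 1),
        (2 * Real.log (a + m) - Real.log (2 * a - 1 + m) - Real.log (1 + m))
        = 2 * (∑ m ∈ Finset.range (n + 1), Real.log (a + m))
          - (∑ m ∈ Finset.range (n + 1), Real.log (2 * a - 1 + m))
          - (∑ m ∈ Finset.range (n + 1), Real.log (1 + (m:ℝ))) := by
      rw [Finset.sum_sub_distrib, Finset.sum_sub_distrib, ← Finset.mul_sum]
    have hT : ∑ m ∈ Finset.range (n + 1), Real.log (1 + (m:ℝ))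
        = Real.log (n ! : ℝ) + Real.log ((n:ℝ) + 1) := by
      rw [sum_log_factorial (n + 1)]
      have hfac : ((n + 1)! : ℝ) = (n ! : ℝ) * ((n:ℝ) + 1) := by
        push_cast [Nat.factorial_succ]
        ring
      rw [hfac, Real.log_mul (by exact_mod_cast (Nat.factorial_pos n).ne') (by positivity)]
    rw [hsplit, hT]
    simp only [Real.BohrMollerup.logGammaSeq]
    ring
  have htail : Tendsto (fun n : ℕ => Real.log ((n:ℝ) + 1) - Real.log (n:ℝ)) atTop (𝓝 0) := by
    have h1 : Tendsto (fun n : ℕ => 1 + 1 / (n:ℝ)) atTop (𝓝 1) := by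
      have := tendsto_one_div_atTop_nhds_zero_nat (𝕜 := ℝ)
      simpa using tendsto_const_nhds.add this
    have h2 : Tendsto (fun n : ℕ => Real.log (1 + 1 / (n:ℝ))) atTop (𝓝 0) := by
      have := (Real.continuousAt_log one_ne_zero).tendsto.comp h1
      simpa [Function.comp_def] using this
    refine h2.congr' ?_
    filter_upwards [eventually_ge_atTop 1] with n hn
    have hn0 : (0:ℝ) < n := by exact_mod_cast hn
    rw [← Real.log_div (by positivity) hn0.ne']
    congr 1
    field_simp
  have hG : Tendsto (fun n => ∫ t in Ioi (0:ℝ), f n t) atTop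
      (𝓝 ((Real.log (Real.Gamma (2 * a - 1)) - 2 * Real.log (Real.Gamma a)) - 0)) := by
    have hD := (Real.BohrMollerup.tendsto_log_gamma h2a).sub
      ((Real.BohrMollerup.tendsto_log_gamma ha0).const_mul 2)
    exact (hD.sub htail).congr fun n => (hIn n).symm
  have key : ∫ t in Ioi (0:ℝ), h t
      = Real.log (Real.Gamma (2 * a - 1)) - 2 * Real.log (Real.Gamma a) := by
    have := tendsto_nhds_unique hmct hG
    simpa using this
  rw [Real.log_div (Real.Gamma_pos_of_pos h2a).ne'
    (pow_ne_zero 2 (Real.Gamma_pos_of_pos ha0).ne'), Real.log_pow, key]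
  push_cast
  ring
end

section
/- The function g(a) = log(Γ(2a-1)/Γ(a)²) is strictly increasing on [1, ∞), with g(1) = 0 and g(2) = log 2. -/
/-!
With `L = log ∘ Γ`, the function is `g a = L (2a - 1) - 2 L a` for `a ≥ 1`. Strict convexity of `L`
on `(0, ∞)` follows from `L x = L (x + 1) - log x`: a convex function plus the strictly convex
`-log`. For `1 ≤ x < y` the interval `[2x - 1, 2y - 1]` lies to the right of `[x, y]` and is twice as
long, so strict convexity makes the increment of `L` over it exceed twice the increment over
`[x, y]`, i.e. `g x < g y`.
-/

open Set Real

theorem StrictConvexOn.slope_lt_slope {𝕜 : Type*} [Field 𝕜] [LinearOrder 𝕜]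
    [IsStrictOrderedRing 𝕜] {s : Set 𝕜} {f : 𝕜 → 𝕜} {x y x' y' : 𝕜}
    (hf : StrictConvexOn 𝕜 s f) (hx : x ∈ s) (hy : y ∈ s) (hx' : x' ∈ s) (hy' : y' ∈ s)
    (hxy : x < y) (hx'y' : x' < y') (hxx' : x ≤ x') (hyy' : y < y') :
    slope f x y < slope f x' y' := by
  simp only [slope_def_field]
  calc (f y - f x) / (y - x) < (f y' - f x) / (y' - x) :=
        hf.secant_strict_mono hx hy hy' hxy.ne' (hxy.trans hyy').ne' hyy'
    _ = (f x - f y') / (x - y') := by rw [← neg_div_neg_eq, neg_sub, neg_sub]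
    _ ≤ (f x' - f y') / (x' - y') :=
        hf.convexOn.secant_mono hy' hx hx' (hxy.trans hyy').ne hx'y'.ne hxx'
    _ = (f y' - f x') / (y' - x') := by rw [← neg_div_neg_eq, neg_sub, neg_sub]

theorem strictConvexOn_log_Gamma : StrictConvexOn ℝ (Ioi 0) (log ∘ Gamma) := by
  have hshift : ConvexOn ℝ (Ioi 0) fun x => log (Gamma (1 + x)) := by
    refine (convexOn_log_Gamma.translate_right 1).subset (fun x hx => ?_) (convex_Ioi 0)
    simp only [mem_preimage, mem_Ioi] at hx ⊢
    linarith
  refine (hshift.add_strictConvexOn strictConcaveOn_log_Ioi.neg).congr fun x hx => ?_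
  rw [mem_Ioi] at hx
  simp [add_comm 1 x, Gamma_add_one hx.ne', log_mul hx.ne' (Gamma_pos_of_pos hx).ne']

theorem log_Gamma_div_Gamma_sq {a b : ℝ} (ha : 0 < a) (hb : 0 < b) :
    log (Gamma a / Gamma b ^ 2) = log (Gamma a) - 2 * log (Gamma b) := by
  rw [log_div (Gamma_pos_of_pos ha).ne' (pow_pos (Gamma_pos_of_pos hb) 2).ne', log_pow,
    Nat.cast_ofNat]

theorem strictMonoOn_log_Gamma_two_mul_sub_one_sub :
    StrictMonoOn (fun a : ℝ => log (Gamma (2 * a - 1)) - 2 * log (Gamma a)) (Ici 1) := by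
  intro x (hx : 1 ≤ x) y (hy : 1 ≤ y) hxy
  have hslope := strictConvexOn_log_Gamma.slope_lt_slope (x' := 2 * x - 1) (y' := 2 * y - 1)
    (mem_Ioi.2 (by linarith)) (mem_Ioi.2 (by linarith)) (mem_Ioi.2 (by linarith))
    (mem_Ioi.2 (by linarith)) hxy (by linarith) (by linarith) (by linarith)
  rw [slope_def_field, slope_def_field, show 2 * y - 1 - (2 * x - 1) = 2 * (y - x) by ring,
    div_lt_div_iff₀ (by linarith) (by linarith)] at hslope
  simp only [Function.comp_apply] at hslope ⊢
  nlinarith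

/-- The function `g(a) = log(Γ(2a-1)/Γ(a)²)` is strictly increasing on `[1,∞)`,
with `g(1) = 0` and `g(2) = log 2`. -/
theorem log_gamma_ratio_strictMono :
    StrictMonoOn (fun a : ℝ => Real.log (Real.Gamma (2 * a - 1) / Real.Gamma a ^ 2)) (Ici 1)
    ∧ Real.log (Real.Gamma (2 * (1 : ℝ) - 1) / Real.Gamma (1 : ℝ) ^ 2) = 0
    ∧ Real.log (Real.Gamma (2 * (2 : ℝ) - 1) / Real.Gamma (2 : ℝ) ^ 2) = Real.log 2 := by
  refine ⟨strictMonoOn_log_Gamma_two_mul_sub_one_sub.congr fun a (ha : 1 ≤ a) => ?_,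
    by norm_num [Gamma_one], by norm_num [Gamma_ofNat_eq_factorial, Gamma_two]⟩
  exact (log_Gamma_div_Gamma_sq (by linarith) (by linarith)).symm
end

section
/- For a ∈ (1,2], the derivative at 0 of the Laplace transform L(u) = 1/(Γ(a+1)·(E_a'(u) + (a/(a-1))·u·E_a''(u))) satisfies -L'(0) = (1/(a-1))·Γ(a)/Γ(2a-1). -/
open Set

/-- First derivative of the Mittag-Leffler function: `E_a'(x) = ∑_{n≥1} n x^{n-1}/Γ(1+an)`. -/
noncomputable def mittagLefflerDeriv (a x : ℝ) : ℝ :=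
  ∑' n : ℕ, ((n : ℝ) + 1) * x ^ n / Real.Gamma (1 + a * (n + 1))

/-- Second derivative of the Mittag-Leffler function:
`E_a''(x) = ∑_{n≥2} n(n-1) x^{n-2}/Γ(1+an)`. -/
noncomputable def mittagLefflerDeriv2 (a x : ℝ) : ℝ :=
  ∑' n : ℕ, ((n : ℝ) + 2) * ((n : ℝ) + 1) * x ^ n / Real.Gamma (1 + a * (n + 2))

lemma one_le_Gamma_of_two_le {x : ℝ} (hx : 2 ≤ x) : 1 ≤ Real.Gamma x := by
  rcases eq_or_lt_of_le hx with h | h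
  · rw [← h, Real.Gamma_two]
  · have := Real.Gamma_strictMonoOn_Ici (le_refl (2:ℝ)) (le_of_lt h) h
    rw [Real.Gamma_two] at this
    exact this.le

lemma mlD1_zero (a : ℝ) : mittagLefflerDeriv a 0 = 1 / Real.Gamma (1 + a) := by
  unfold mittagLefflerDeriv
  rw [tsum_eq_single 0]
  · norm_num
  · intro n hn
    simp [zero_pow hn]

lemma mlD2_zero (a : ℝ) : mittagLefflerDeriv2 a 0 = 2 / Real.Gamma (1 + a * 2) := by
  unfold mittagLefflerDeriv2
  rw [tsum_eq_single 0]
  · norm_num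
  · intro n hn
    simp [zero_pow hn]

lemma mlD1_hasDerivAt (a : ℝ) (ha : 1 < a) :
    HasDerivAt (mittagLefflerDeriv a) (2 / Real.Gamma (1 + a * 2)) 0 := by
  have hG : ∀ n : ℕ, 1 ≤ Real.Gamma (1 + a * ((n : ℝ) + 1)) := by
    intro n
    apply one_le_Gamma_of_two_le
    have hn : (1 : ℝ) ≤ (n : ℝ) + 1 := by linarith [Nat.cast_nonneg (α := ℝ) n]
    nlinarith [hn, ha]
  have key := hasDerivAt_tsum_of_isPreconnected
    (u := fun n : ℕ => 4 * ((n : ℝ) ^ 2 * (1/2 : ℝ) ^ n))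
    (g := fun (n : ℕ) (y : ℝ) => ((n : ℝ) + 1) * y ^ n / Real.Gamma (1 + a * (n + 1)))
    (g' := fun (n : ℕ) (y : ℝ) =>
      ((n : ℝ) + 1) * ((n : ℝ) * y ^ (n - 1)) / Real.Gamma (1 + a * (n + 1)))
    (t := Metric.ball (0:ℝ) (1/2)) (y₀ := (0:ℝ)) (y := (0:ℝ))
    ?_ Metric.isOpen_ball ((convex_ball (0:ℝ) (1/2)).isPreconnected)
    ?_ ?_ (by simp) ?_ (by simp)
  · have heq : (fun z : ℝ => ∑' n : ℕ,
        ((n : ℝ) + 1) * z ^ n / Real.Gamma (1 + a * (n + 1))) = mittagLefflerDeriv a := rfl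
    rw [heq] at key
    refine key.congr_deriv ?_
    rw [tsum_eq_single 1]
    · norm_num
    · intro n hn
      match n with
      | 0 => simp
      | 1 => exact absurd rfl hn
      | (k+2) => simp [zero_pow]
  · exact (summable_pow_mul_geometric_of_norm_lt_one 2 (r := (1/2 : ℝ)) (by norm_num)).mul_left 4
  · intro n y _
    exact ((hasDerivAt_pow n y).const_mul _).div_const _
  · intro n y hy
    have hy' : |y| ≤ 1/2 := le_of_lt (by simpa [Real.norm_eq_abs] using hy)
    have hGn := hG n
    have hGpos : (0:ℝ) < Real.Gamma (1 + a * ((n : ℝ) + 1)) := lt_of_lt_of_le one_pos hGn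
    rw [Real.norm_eq_abs, abs_div, abs_of_pos hGpos, abs_mul, abs_mul]
    have h1 : |((n : ℝ) + 1)| = (n : ℝ) + 1 := abs_of_pos (by positivity)
    have h2 : |(n : ℝ)| = (n : ℝ) := abs_of_nonneg (Nat.cast_nonneg n)
    rw [h1, h2, abs_pow]
    have hpow : |y| ^ (n - 1) ≤ (1/2 : ℝ) ^ (n - 1) :=
      pow_le_pow_left₀ (abs_nonneg y) hy' _
    have hstep : ((n : ℝ) + 1) * ((n : ℝ) * |y| ^ (n - 1)) ≤
        ((n : ℝ) + 1) * ((n : ℝ) * (1/2 : ℝ) ^ (n - 1)) := by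
      gcongr
    calc ((n : ℝ) + 1) * ((n : ℝ) * |y| ^ (n - 1)) / Real.Gamma (1 + a * ((n : ℝ) + 1))
        ≤ ((n : ℝ) + 1) * ((n : ℝ) * |y| ^ (n - 1)) := div_le_self (by positivity) hGn
      _ ≤ ((n : ℝ) + 1) * ((n : ℝ) * (1/2 : ℝ) ^ (n - 1)) := hstep
      _ ≤ 4 * ((n : ℝ) ^ 2 * (1/2 : ℝ) ^ n) := by
          match n with
          | 0 => norm_num
          | (k+1) =>
            have hp : (0:ℝ) < (1/2 : ℝ) ^ k := by positivity
            push_cast [pow_succ]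
            nlinarith [mul_nonneg (mul_nonneg (Nat.cast_nonneg (α := ℝ) k) (Nat.cast_nonneg (α := ℝ) k)) hp.le, mul_nonneg (Nat.cast_nonneg (α := ℝ) k) hp.le]
  · refine summable_of_ne_finset_zero (s := {0}) fun n hn => ?_
    have : n ≠ 0 := by simpa using hn
    simp [zero_pow this]

lemma mlD2_hasDerivAt (a : ℝ) (ha : 1 < a) :
    ∃ d, HasDerivAt (mittagLefflerDeriv2 a) d 0 := by
  have hG : ∀ n : ℕ, 1 ≤ Real.Gamma (1 + a * ((n : ℝ) + 2)) := by
    intro n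
    apply one_le_Gamma_of_two_le
    have hn : (2 : ℝ) ≤ (n : ℝ) + 2 := by linarith [Nat.cast_nonneg (α := ℝ) n]
    nlinarith [hn, ha]
  have key := hasDerivAt_tsum_of_isPreconnected
    (u := fun n : ℕ => 12 * ((n : ℝ) ^ 3 * (1/2 : ℝ) ^ n))
    (g := fun (n : ℕ) (y : ℝ) =>
      ((n : ℝ) + 2) * ((n : ℝ) + 1) * y ^ n / Real.Gamma (1 + a * (n + 2)))
    (g' := fun (n : ℕ) (y : ℝ) =>
      ((n : ℝ) + 2) * ((n : ℝ) + 1) * ((n : ℝ) * y ^ (n - 1)) / Real.Gamma (1 + a * (n + 2)))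
    (t := Metric.ball (0:ℝ) (1/2)) (y₀ := (0:ℝ)) (y := (0:ℝ))
    ?_ Metric.isOpen_ball ((convex_ball (0:ℝ) (1/2)).isPreconnected)
    ?_ ?_ (by simp) ?_ (by simp)
  · exact ⟨_, key⟩
  · exact (summable_pow_mul_geometric_of_norm_lt_one 3 (r := (1/2 : ℝ)) (by norm_num)).mul_left 12
  · intro n y _
    exact ((hasDerivAt_pow n y).const_mul _).div_const _
  · intro n y hy
    have hy' : |y| ≤ 1/2 := le_of_lt (by simpa [Real.norm_eq_abs] using hy)
    have hGn := hG n
    have hGpos : (0:ℝ) < Real.Gamma (1 + a * ((n : ℝ) + 2)) := lt_of_lt_of_le one_pos hGn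
    rw [Real.norm_eq_abs, abs_div, abs_of_pos hGpos, abs_mul, abs_mul, abs_mul]
    have h1 : |((n : ℝ) + 2)| = (n : ℝ) + 2 := abs_of_pos (by positivity)
    have h2 : |((n : ℝ) + 1)| = (n : ℝ) + 1 := abs_of_pos (by positivity)
    have h3 : |(n : ℝ)| = (n : ℝ) := abs_of_nonneg (Nat.cast_nonneg n)
    rw [h1, h2, h3, abs_pow]
    have hpow : |y| ^ (n - 1) ≤ (1/2 : ℝ) ^ (n - 1) :=
      pow_le_pow_left₀ (abs_nonneg y) hy' _
    calc ((n : ℝ) + 2) * ((n : ℝ) + 1) * ((n : ℝ) * |y| ^ (n - 1)) /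
          Real.Gamma (1 + a * ((n : ℝ) + 2))
        ≤ ((n : ℝ) + 2) * ((n : ℝ) + 1) * ((n : ℝ) * |y| ^ (n - 1)) :=
          div_le_self (by positivity) hGn
      _ ≤ ((n : ℝ) + 2) * ((n : ℝ) + 1) * ((n : ℝ) * (1/2 : ℝ) ^ (n - 1)) := by gcongr
      _ ≤ 12 * ((n : ℝ) ^ 3 * (1/2 : ℝ) ^ n) := by
          match n with
          | 0 => norm_num
          | (k+1) =>
            have hp : (0:ℝ) < (1/2 : ℝ) ^ k := by positivity
            push_cast [pow_succ]
            nlinarith [mul_nonneg (mul_nonneg (Nat.cast_nonneg (α := ℝ) k)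
              (Nat.cast_nonneg (α := ℝ) k)) hp.le,
              mul_nonneg (Nat.cast_nonneg (α := ℝ) k) hp.le,
              mul_nonneg (mul_nonneg (mul_nonneg (Nat.cast_nonneg (α := ℝ) k)
                (Nat.cast_nonneg (α := ℝ) k)) (Nat.cast_nonneg (α := ℝ) k)) hp.le]
  · refine summable_of_ne_finset_zero (s := {0}) fun n hn => ?_
    have : n ≠ 0 := by simpa using hn
    simp [zero_pow this]

/-- For `a ∈ (1,2]`, the Laplace transform
`L(u) = 1/(Γ(a+1)(E_a'(u) + (a/(a-1)) u E_a''(u)))` of the length of an upward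
1-slope satisfies `-L'(0) = Γ(a)/((a-1)Γ(2a-1))`. -/
theorem neg_deriv_upward_laplace_at_zero (a : ℝ) (ha : a ∈ Ioc (1 : ℝ) 2) :
    -deriv (fun u : ℝ =>
        1 / (Real.Gamma (a + 1) * (mittagLefflerDeriv a u
            + a / (a - 1) * u * mittagLefflerDeriv2 a u))) 0
      = (1 / (a - 1)) * (Real.Gamma a / Real.Gamma (2 * a - 1)) := by
  obtain ⟨ha1, ha2⟩ := ha
  have h1 := mlD1_hasDerivAt a ha1
  obtain ⟨d2, h2⟩ := mlD2_hasDerivAt a ha1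
  have hid : HasDerivAt (fun u : ℝ => a / (a - 1) * u) (a / (a - 1)) (0:ℝ) := by
    simpa using (hasDerivAt_id (0:ℝ)).const_mul (a / (a - 1))
  have hmul : HasDerivAt (fun u : ℝ => a / (a - 1) * u * mittagLefflerDeriv2 a u)
      (a / (a - 1) * mittagLefflerDeriv2 a 0) 0 := by
    exact (hid.mul h2).congr_deriv (by simp)
  have hg : HasDerivAt (fun u : ℝ => mittagLefflerDeriv a u
      + a / (a - 1) * u * mittagLefflerDeriv2 a u)
      (2 / Real.Gamma (1 + a * 2) + a / (a - 1) * (2 / Real.Gamma (1 + a * 2))) 0 := by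
    have := h1.add hmul
    rw [mlD2_zero] at this
    exact this
  have hd : HasDerivAt (fun u : ℝ => Real.Gamma (a + 1) * (mittagLefflerDeriv a u
      + a / (a - 1) * u * mittagLefflerDeriv2 a u))
      (Real.Gamma (a + 1) * (2 / Real.Gamma (1 + a * 2)
        + a / (a - 1) * (2 / Real.Gamma (1 + a * 2)))) 0 := hg.const_mul _
  have hΓ1a : 0 < Real.Gamma (1 + a) := Real.Gamma_pos_of_pos (by linarith)
  have hΓa1 : 0 < Real.Gamma (a + 1) := Real.Gamma_pos_of_pos (by linarith)
  have hΓ2a : 0 < Real.Gamma (1 + a * 2) := Real.Gamma_pos_of_pos (by nlinarith)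
  have hΓ2am1 : 0 < Real.Gamma (2 * a - 1) := Real.Gamma_pos_of_pos (by linarith)
  have hval : Real.Gamma (a + 1) * (mittagLefflerDeriv a 0
      + a / (a - 1) * 0 * mittagLefflerDeriv2 a 0) = 1 := by
    rw [mlD1_zero, add_comm (1:ℝ) a]
    field_simp
    ring
  have hne : Real.Gamma (a + 1) * (mittagLefflerDeriv a 0
      + a / (a - 1) * 0 * mittagLefflerDeriv2 a 0) ≠ 0 := by rw [hval]; norm_num
  have hF := (hasDerivAt_const (0:ℝ) (1:ℝ)).fun_div hd hne
  rw [hF.deriv, hval]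
  have hA : Real.Gamma (a + 1) = a * Real.Gamma a :=
    Real.Gamma_add_one (by linarith)
  have hB : Real.Gamma (1 + a * 2) = (2 * a - 1 + 1) * ((2 * a - 1) * Real.Gamma (2 * a - 1)) := by
    have h1 : (1 + a * 2 : ℝ) = (2 * a - 1 + 1) + 1 := by ring
    rw [h1, Real.Gamma_add_one (by linarith : (2 * a - 1 + 1 : ℝ) ≠ 0),
      Real.Gamma_add_one (by linarith : (2 * a - 1 : ℝ) ≠ 0)]
  rw [hA, hB]
  have hane : a ≠ 0 := by linarith
  have ham1 : a - 1 ≠ 0 := by linarith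
  have h2am1 : (2 * a - 1 : ℝ) ≠ 0 := by linarith
  have h2a : (2 * a - 1 + 1 : ℝ) ≠ 0 := by linarith
  have hΓne : Real.Gamma (2 * a - 1) ≠ 0 := hΓ2am1.ne'
  have h2am1' : (a * 2 - 1 : ℝ) ≠ 0 := by linarith
  have hΓne' : Real.Gamma (a * 2 - 1) ≠ 0 := by rw [mul_comm]; exact hΓne
  field_simp
  ring
end

section
/- Let w : ℝ → ℝ be càdlàg, let x > 0, and suppose (as holds a.s. for the Lévy processes considered) that w is continuous at every one-sided local extremum, never takes the same value at two local minima or at two local maxima, and satisfies liminf_{|t|→∞} w_t = -∞, limsup_{|t|→∞} w_t = +∞. Then between any two distinct points of x-minimum there is exactly one point of x-maximum, and the set R_x(w) of x-extrema has no accumulation point in ℝ. -/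
open Filter Set Topology

/-- `w` admits an `x`-minimum at `y₀`: there are `α < y₀ < β` with
`w(y₀) = inf{w(y) : y ∈ [α,β]}`, `w(α) ≥ w(y₀)+x` and `w(β) ≥ w(y₀)+x`. -/
def IsXMin (w : ℝ → ℝ) (x y₀ : ℝ) : Prop :=
  ∃ α β : ℝ, α < y₀ ∧ y₀ < β ∧ (∀ y ∈ Icc α β, w y₀ ≤ w y)
    ∧ w y₀ + x ≤ w α ∧ w y₀ + x ≤ w β

/-- `w` admits an `x`-maximum at `y₀`: `-w` admits an `x`-minimum at `y₀`. -/
def IsXMax (w : ℝ → ℝ) (x y₀ : ℝ) : Prop := IsXMin (fun y => -w y) x y₀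

/-- `t₀` is a one-sided local extremum of `w`: a right local maximum or minimum
(comparison with `w t₀`), or a left local maximum or minimum (comparison with the left
limit of `w` at `t₀`). -/
def IsOneSidedLocalExtremum (w : ℝ → ℝ) (t₀ : ℝ) : Prop :=
  (∃ ε > (0 : ℝ), ∀ s, t₀ < s → s < t₀ + ε → w s ≤ w t₀)
  ∨ (∃ ε > (0 : ℝ), ∀ s, t₀ < s → s < t₀ + ε → w t₀ ≤ w s)
  ∨ (∃ l : ℝ, Tendsto w (nhdsWithin t₀ (Iio t₀)) (nhds l)
      ∧ ∃ ε > (0 : ℝ), ∀ s, t₀ - ε < s → s < t₀ → w s ≤ l)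
  ∨ (∃ l : ℝ, Tendsto w (nhdsWithin t₀ (Iio t₀)) (nhds l)
      ∧ ∃ ε > (0 : ℝ), ∀ s, t₀ - ε < s → s < t₀ → l ≤ w s)

section Helpers

lemma neg_extremum {w : ℝ → ℝ} {t₀ : ℝ}
    (h : IsOneSidedLocalExtremum (fun y => -w y) t₀) : IsOneSidedLocalExtremum w t₀ := by
  rcases h with ⟨ε, hε, h⟩ | ⟨ε, hε, h⟩ | ⟨l, hl, ε, hε, h⟩ | ⟨l, hl, ε, hε, h⟩
  · exact Or.inr (Or.inl ⟨ε, hε, fun s h1 h2 => by have := h s h1 h2; simp only at this; linarith⟩)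
  · exact Or.inl ⟨ε, hε, fun s h1 h2 => by have := h s h1 h2; simp only at this; linarith⟩
  · refine Or.inr (Or.inr (Or.inr ⟨-l, ?_, ε, hε, fun s h1 h2 => by
      have := h s h1 h2; simp only at this; linarith⟩))
    have := hl.neg; simpa using this
  · refine Or.inr (Or.inr (Or.inl ⟨-l, ?_, ε, hε, fun s h1 h2 => by
      have := h s h1 h2; simp only at this; linarith⟩))
    have := hl.neg; simpa using this

/-- A càdlàg function continuous at one-sided local extrema attains its max on `[a,b]`. -/
lemma exists_max_on_Icc (w : ℝ → ℝ)
    (h_rc : ∀ t : ℝ, ContinuousWithinAt w (Ici t) t)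
    (h_ll : ∀ t : ℝ, ∃ l : ℝ, Tendsto w (nhdsWithin t (Iio t)) (nhds l))
    (h_ce : ∀ t₀ : ℝ, IsOneSidedLocalExtremum w t₀ → ContinuousAt w t₀)
    {a b : ℝ} (hab : a ≤ b) :
    ∃ m ∈ Icc a b, ∀ y ∈ Icc a b, w y ≤ w m := by
  have hbdd : BddAbove (w '' Icc a b) := by
    by_contra hb
    have hex : ∀ n : ℕ, ∃ s, s ∈ Icc a b ∧ (n : ℝ) < w s := by
      intro n
      rcases not_bddAbove_iff.1 hb (n : ℝ) with ⟨y, ⟨s, hs, rfl⟩, hy⟩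
      exact ⟨s, hs, hy⟩
    choose u hu hwu using hex
    obtain ⟨t0, ht0, φ, hφ, hlim⟩ := (isCompact_Icc (a := a) (b := b)).tendsto_subseq hu
    have hwtop : Tendsto (fun n => w (u (φ n))) atTop atTop := by
      apply tendsto_atTop_mono (fun n => (hwu (φ n)).le)
      exact tendsto_natCast_atTop_atTop.comp hφ.tendsto_atTop
    by_cases hc : ∀ᶠ n in atTop, u (φ n) < t0
    · obtain ⟨l, hl⟩ := h_ll t0
      have h1 : Tendsto (u ∘ φ) atTop (𝓝[<] t0) := tendsto_nhdsWithin_iff.2 ⟨hlim, hc⟩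
      exact not_tendsto_atTop_of_tendsto_nhds (hl.comp h1) hwtop
    · have hfreq : ∃ᶠ n in atTop, t0 ≤ u (φ n) :=
        (Filter.not_eventually.mp hc).mono fun n h => not_lt.1 h
      obtain ⟨ψ, hψ, hge⟩ := Filter.extraction_of_frequently_atTop hfreq
      have h1 : Tendsto (u ∘ φ ∘ ψ) atTop (𝓝[≥] t0) :=
        tendsto_nhdsWithin_iff.2 ⟨hlim.comp hψ.tendsto_atTop,
          Filter.Eventually.of_forall fun n => hge n⟩
      have h2 : Tendsto (fun n => w (u (φ (ψ n)))) atTop (𝓝 (w t0)) :=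
        (h_rc t0).tendsto.comp h1
      exact not_tendsto_atTop_of_tendsto_nhds h2 (hwtop.comp hψ.tendsto_atTop)
  have hne : (w '' Icc a b).Nonempty := ⟨w a, a, ⟨le_refl a, hab⟩, rfl⟩
  set M := sSup (w '' Icc a b) with hM
  have hle : ∀ y ∈ Icc a b, w y ≤ M := fun y hy => le_csSup hbdd ⟨y, hy, rfl⟩
  have hex : ∀ n : ℕ, ∃ s, s ∈ Icc a b ∧ M - 1 / ((n : ℝ) + 1) < w s := by
    intro n
    have h1 : M - 1 / ((n : ℝ) + 1) < M := by
      have : (0 : ℝ) < 1 / ((n : ℝ) + 1) := by positivity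
      linarith
    rcases exists_lt_of_lt_csSup hne h1 with ⟨y, ⟨s, hs, rfl⟩, hy⟩
    exact ⟨s, hs, hy⟩
  choose u hu hwu using hex
  have hlo : Tendsto (fun n : ℕ => M - 1 / ((n : ℝ) + 1)) atTop (𝓝 M) := by
    have h0 := tendsto_one_div_add_atTop_nhds_zero_nat (𝕜 := ℝ)
    have := (tendsto_const_nhds (x := M) (f := (atTop : Filter ℕ))).sub h0
    simpa using this
  have hwlim : Tendsto (fun n => w (u n)) atTop (𝓝 M) :=
    tendsto_of_tendsto_of_tendsto_of_le_of_le hlo tendsto_const_nhds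
      (fun n => (hwu n).le) (fun n => hle _ (hu n))
  obtain ⟨t0, ht0, φ, hφ, hlim⟩ := (isCompact_Icc (a := a) (b := b)).tendsto_subseq hu
  have hwlim' : Tendsto (fun n => w (u (φ n))) atTop (𝓝 M) := hwlim.comp hφ.tendsto_atTop
  refine ⟨t0, ht0, fun y hy => ?_⟩
  suffices hwt : w t0 = M by rw [hwt]; exact hle y hy
  by_cases hc : ∀ᶠ n in atTop, u (φ n) < t0
  · obtain ⟨l, hl⟩ := h_ll t0
    have h1 : Tendsto (u ∘ φ) atTop (𝓝[<] t0) := tendsto_nhdsWithin_iff.2 ⟨hlim, hc⟩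
    have hlM : l = M := tendsto_nhds_unique (hl.comp h1) hwlim'
    obtain ⟨n, hn⟩ := hc.exists
    have hat : a < t0 := lt_of_le_of_lt (hu (φ n)).1 hn
    have hext : IsOneSidedLocalExtremum w t0 := by
      refine Or.inr (Or.inr (Or.inl ⟨l, hl, t0 - a, by linarith, fun s hs1 hs2 => ?_⟩))
      have hs : w s ≤ M := hle s ⟨by linarith, le_trans hs2.le ht0.2⟩
      rw [hlM]; exact hs
    have hcont := h_ce t0 hext
    have h2 : Tendsto w (𝓝[<] t0) (𝓝 (w t0)) := hcont.continuousWithinAt.tendsto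
    rw [tendsto_nhds_unique h2 hl]; exact hlM
  · have hfreq : ∃ᶠ n in atTop, t0 ≤ u (φ n) :=
      (Filter.not_eventually.mp hc).mono fun n h => not_lt.1 h
    obtain ⟨ψ, hψ, hge⟩ := Filter.extraction_of_frequently_atTop hfreq
    have h1 : Tendsto (u ∘ φ ∘ ψ) atTop (𝓝[≥] t0) :=
      tendsto_nhdsWithin_iff.2 ⟨hlim.comp hψ.tendsto_atTop,
        Filter.Eventually.of_forall fun n => hge n⟩
    have h2 : Tendsto (fun n => w (u (φ (ψ n)))) atTop (𝓝 (w t0)) :=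
      (h_rc t0).tendsto.comp h1
    exact tendsto_nhds_unique h2 (hwlim'.comp hψ.tendsto_atTop)

lemma exists_min_on_Icc (w : ℝ → ℝ)
    (h_rc : ∀ t : ℝ, ContinuousWithinAt w (Ici t) t)
    (h_ll : ∀ t : ℝ, ∃ l : ℝ, Tendsto w (nhdsWithin t (Iio t)) (nhds l))
    (h_ce : ∀ t₀ : ℝ, IsOneSidedLocalExtremum w t₀ → ContinuousAt w t₀)
    {a b : ℝ} (hab : a ≤ b) :
    ∃ m ∈ Icc a b, ∀ y ∈ Icc a b, w m ≤ w y := by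
  obtain ⟨m, hm, h⟩ := exists_max_on_Icc (fun y => -w y)
    (fun t => (h_rc t).neg)
    (fun t => by obtain ⟨l, hl⟩ := h_ll t; exact ⟨-l, hl.neg⟩)
    (fun t ht => ((h_ce t (neg_extremum ht)).neg)) hab
  exact ⟨m, hm, fun y hy => by have := h y hy; linarith⟩

lemma isLocalMin_of_isXMin {w : ℝ → ℝ} {x y₀ : ℝ} (h : IsXMin w x y₀) : IsLocalMin w y₀ := by
  obtain ⟨α, β, hα, hβ, hinf, -, -⟩ := h
  exact Filter.eventually_of_mem (Ioo_mem_nhds hα hβ) fun y hy => hinf y ⟨hy.1.le, hy.2.le⟩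

lemma xmin_pair {w : ℝ → ℝ} {x : ℝ}
    (h_min_inj : ∀ s t : ℝ, s ≠ t → IsLocalMin w s → IsLocalMin w t → w s ≠ w t)
    {y₁ y₂ : ℝ} (h12 : y₁ < y₂) (h1 : IsXMin w x y₁) (h2 : IsXMin w x y₂) :
    (∃ u ∈ Icc y₁ y₂, w y₁ + x ≤ w u) ∧ (∃ u ∈ Icc y₁ y₂, w y₂ + x ≤ w u) := by
  obtain ⟨α₁, β₁, hα₁, hβ₁, hinf₁, hxa₁, hxb₁⟩ := h1
  obtain ⟨α₂, β₂, hα₂, hβ₂, hinf₂, hxa₂, hxb₂⟩ := h2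
  rcases le_or_gt β₁ y₂ with hb | hb <;> rcases le_or_gt y₁ α₂ with ha | ha
  · exact ⟨⟨β₁, ⟨hβ₁.le, hb⟩, hxb₁⟩, ⟨α₂, ⟨ha, hα₂.le⟩, hxa₂⟩⟩
  · have h21 : w y₂ ≤ w y₁ := hinf₂ y₁ ⟨ha.le, le_trans h12.le hβ₂.le⟩
    exact ⟨⟨β₁, ⟨hβ₁.le, hb⟩, hxb₁⟩, ⟨β₁, ⟨hβ₁.le, hb⟩, by linarith⟩⟩
  · have h12' : w y₁ ≤ w y₂ := hinf₁ y₂ ⟨le_trans hα₁.le h12.le, hb.le⟩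
    exact ⟨⟨α₂, ⟨ha, hα₂.le⟩, by linarith⟩, ⟨α₂, ⟨ha, hα₂.le⟩, hxa₂⟩⟩
  · have h21 : w y₂ ≤ w y₁ := hinf₂ y₁ ⟨ha.le, le_trans h12.le hβ₂.le⟩
    have h12' : w y₁ ≤ w y₂ := hinf₁ y₂ ⟨le_trans hα₁.le h12.le, hb.le⟩
    exact absurd (le_antisymm h12' h21)
      (h_min_inj y₁ y₂ h12.ne
        (isLocalMin_of_isXMin ⟨α₁, β₁, hα₁, hβ₁, hinf₁, hxa₁, hxb₁⟩)
        (isLocalMin_of_isXMin ⟨α₂, β₂, hα₂, hβ₂, hinf₂, hxa₂, hxb₂⟩))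

lemma neg_localMin_inj {w : ℝ → ℝ}
    (h_max_inj : ∀ s t : ℝ, s ≠ t → IsLocalMax w s → IsLocalMax w t → w s ≠ w t) :
    ∀ s t : ℝ, s ≠ t → IsLocalMin (fun y => -w y) s → IsLocalMin (fun y => -w y) t →
      (fun y => -w y) s ≠ (fun y => -w y) t := by
  intro s t hst hs ht
  have hs' : IsLocalMax w s := Filter.Eventually.mono hs fun y hy => by
    simp only at hy; linarith
  have ht' : IsLocalMax w t := Filter.Eventually.mono ht fun y hy => by
    simp only at hy; linarith
  have := h_max_inj s t hst hs' ht'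
  exact fun heq => this (neg_injective heq)

lemma xmax_pair {w : ℝ → ℝ} {x : ℝ}
    (h_max_inj : ∀ s t : ℝ, s ≠ t → IsLocalMax w s → IsLocalMax w t → w s ≠ w t)
    {y₁ y₂ : ℝ} (h12 : y₁ < y₂) (h1 : IsXMax w x y₁) (h2 : IsXMax w x y₂) :
    (∃ u ∈ Icc y₁ y₂, w u + x ≤ w y₁) ∧ (∃ u ∈ Icc y₁ y₂, w u + x ≤ w y₂) := by
  obtain ⟨⟨u₁, hu₁, hw1⟩, ⟨u₂, hu₂, hw2⟩⟩ :=
    xmin_pair (neg_localMin_inj h_max_inj) h12 h1 h2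
  exact ⟨⟨u₁, hu₁, by linarith⟩, ⟨u₂, hu₂, by linarith⟩⟩

/-- Between two points of `x`-minimum there is a point of `x`-maximum. -/
lemma xmax_between {w : ℝ → ℝ} {x : ℝ} (hx : 0 < x)
    (h_rc : ∀ t : ℝ, ContinuousWithinAt w (Ici t) t)
    (h_ll : ∀ t : ℝ, ∃ l : ℝ, Tendsto w (nhdsWithin t (Iio t)) (nhds l))
    (h_ce : ∀ t₀ : ℝ, IsOneSidedLocalExtremum w t₀ → ContinuousAt w t₀)
    (h_min_inj : ∀ s t : ℝ, s ≠ t → IsLocalMin w s → IsLocalMin w t → w s ≠ w t)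
    {y₁ y₂ : ℝ} (h12 : y₁ < y₂) (h1 : IsXMin w x y₁) (h2 : IsXMin w x y₂) :
    ∃ m ∈ Ioo y₁ y₂, IsXMax w x m := by
  obtain ⟨m, hm, hmax⟩ := exists_max_on_Icc w h_rc h_ll h_ce h12.le
  obtain ⟨⟨u₁, hu₁, hw1⟩, ⟨u₂, hu₂, hw2⟩⟩ := xmin_pair h_min_inj h12 h1 h2
  have hm1 : w y₁ + x ≤ w m := le_trans hw1 (hmax u₁ hu₁)
  have hm2 : w y₂ + x ≤ w m := le_trans hw2 (hmax u₂ hu₂)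
  have hne1 : m ≠ y₁ := by rintro rfl; linarith
  have hne2 : m ≠ y₂ := by rintro rfl; linarith
  refine ⟨m, ⟨lt_of_le_of_ne hm.1 (Ne.symm hne1), lt_of_le_of_ne hm.2 hne2⟩, ?_⟩
  refine ⟨y₁, y₂, lt_of_le_of_ne hm.1 (Ne.symm hne1), lt_of_le_of_ne hm.2 hne2,
    fun y hy => ?_, by simp only; linarith, by simp only; linarith⟩
  simp only [neg_le_neg_iff]
  exact hmax y hy

/-- Between two points of `x`-maximum there is a point of `x`-minimum. -/
lemma xmin_between {w : ℝ → ℝ} {x : ℝ} (hx : 0 < x)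
    (h_rc : ∀ t : ℝ, ContinuousWithinAt w (Ici t) t)
    (h_ll : ∀ t : ℝ, ∃ l : ℝ, Tendsto w (nhdsWithin t (Iio t)) (nhds l))
    (h_ce : ∀ t₀ : ℝ, IsOneSidedLocalExtremum w t₀ → ContinuousAt w t₀)
    (h_max_inj : ∀ s t : ℝ, s ≠ t → IsLocalMax w s → IsLocalMax w t → w s ≠ w t)
    {y₁ y₂ : ℝ} (h12 : y₁ < y₂) (h1 : IsXMax w x y₁) (h2 : IsXMax w x y₂) :
    ∃ m ∈ Ioo y₁ y₂, IsXMin w x m := by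
  obtain ⟨m, hm, hmin⟩ := exists_min_on_Icc w h_rc h_ll h_ce h12.le
  obtain ⟨⟨u₁, hu₁, hw1⟩, ⟨u₂, hu₂, hw2⟩⟩ := xmax_pair h_max_inj h12 h1 h2
  have hm1 : w m + x ≤ w y₁ := le_trans (by have := hmin u₁ hu₁; linarith) hw1
  have hm2 : w m + x ≤ w y₂ := le_trans (by have := hmin u₂ hu₂; linarith) hw2
  have hne1 : m ≠ y₁ := by rintro rfl; linarith
  have hne2 : m ≠ y₂ := by rintro rfl; linarith
  exact ⟨m, ⟨lt_of_le_of_ne hm.1 (Ne.symm hne1), lt_of_le_of_ne hm.2 hne2⟩,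
    y₁, y₂, lt_of_le_of_ne hm.1 (Ne.symm hne1), lt_of_le_of_ne hm.2 hne2,
    fun y hy => hmin y hy, by linarith, by linarith⟩

/-- Oscillation near the right of `p` contradicts right-continuity. -/
lemma right_contra {w : ℝ → ℝ} {x p : ℝ} (hx : 0 < x)
    (hc : ContinuousWithinAt w (Ici p) p)
    {P : ℝ → Prop} (hfreq : ∃ᶠ y in 𝓝[>] p, P y)
    (hpair : ∀ y₁ y₂, y₁ < y₂ → P y₁ → P y₂ →
      ∃ u ∈ Icc y₁ y₂, ∃ v ∈ Icc y₁ y₂, w v + x ≤ w u) : False := by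
  have hball : {s : ℝ | |w s - w p| < x / 2} ∈ 𝓝[≥] p := by
    have := hc (Metric.ball_mem_nhds (w p) (by linarith : (0:ℝ) < x / 2))
    exact this
  rw [mem_nhdsGE_iff_exists_Ico_subset] at hball
  obtain ⟨c, hcp, hsub⟩ := hball
  have hmem1 : ∀ᶠ y in 𝓝[>] p, y ∈ Ioo p c := Ioo_mem_nhdsGT_of_mem ⟨le_refl p, hcp⟩
  obtain ⟨y₁, hPy₁, hy₁⟩ := (hfreq.and_eventually hmem1).exists
  have hmem2 : ∀ᶠ y in 𝓝[>] p, y ∈ Ioo p y₁ := Ioo_mem_nhdsGT_of_mem ⟨le_refl p, hy₁.1⟩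
  obtain ⟨y₂, hPy₂, hy₂⟩ := (hfreq.and_eventually hmem2).exists
  obtain ⟨u, hu, v, hv, hw⟩ := hpair y₂ y₁ hy₂.2 hPy₂ hPy₁
  have hu' : |w u - w p| < x / 2 :=
    hsub ⟨le_trans hy₂.1.le hu.1, lt_of_le_of_lt hu.2 hy₁.2⟩
  have hv' : |w v - w p| < x / 2 :=
    hsub ⟨le_trans hy₂.1.le hv.1, lt_of_le_of_lt hv.2 hy₁.2⟩
  rw [abs_lt] at hu' hv'
  linarith [hu'.1, hu'.2, hv'.1, hv'.2]

/-- Oscillation near the left of `p` contradicts the existence of a left limit. -/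
lemma left_contra {w : ℝ → ℝ} {x p : ℝ} (hx : 0 < x)
    {l : ℝ} (hl : Tendsto w (nhdsWithin p (Iio p)) (nhds l))
    {P : ℝ → Prop} (hfreq : ∃ᶠ y in 𝓝[<] p, P y)
    (hpair : ∀ y₁ y₂, y₁ < y₂ → P y₁ → P y₂ →
      ∃ u ∈ Icc y₁ y₂, ∃ v ∈ Icc y₁ y₂, w v + x ≤ w u) : False := by
  have hball : {s : ℝ | |w s - l| < x / 2} ∈ 𝓝[<] p := by
    have := hl (Metric.ball_mem_nhds l (by linarith : (0:ℝ) < x / 2))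
    exact this
  rw [mem_nhdsLT_iff_exists_Ioo_subset] at hball
  obtain ⟨c, hcp, hsub⟩ := hball
  have hmem1 : ∀ᶠ y in 𝓝[<] p, y ∈ Ioo c p := Ioo_mem_nhdsLT_of_mem ⟨hcp, le_refl p⟩
  obtain ⟨y₁, hPy₁, hy₁⟩ := (hfreq.and_eventually hmem1).exists
  have hmem2 : ∀ᶠ y in 𝓝[<] p, y ∈ Ioo y₁ p := Ioo_mem_nhdsLT_of_mem ⟨hy₁.2, le_refl p⟩
  obtain ⟨y₂, hPy₂, hy₂⟩ := (hfreq.and_eventually hmem2).exists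
  obtain ⟨u, hu, v, hv, hw⟩ := hpair y₁ y₂ hy₂.1 hPy₁ hPy₂
  have hu' : |w u - l| < x / 2 :=
    hsub ⟨lt_of_lt_of_le hy₁.1 hu.1, lt_of_le_of_lt hu.2 hy₂.2⟩
  have hv' : |w v - l| < x / 2 :=
    hsub ⟨lt_of_lt_of_le hy₁.1 hv.1, lt_of_le_of_lt hv.2 hy₂.2⟩
  rw [abs_lt] at hu' hv'
  linarith [hu'.1, hu'.2, hv'.1, hv'.2]

end Helpers

/-- For a càdlàg `w : ℝ → ℝ` which is continuous at every one-sided local extremum,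
never takes the same value at two distinct local minima or two distinct local maxima,
and oscillates to `±∞` at `±∞`, between any two distinct (consecutive) points of
`x`-minimum there is exactly one point of `x`-maximum, and the set `R_x(w)` of
`x`-extrema has no accumulation point in `ℝ`. -/
theorem x_extrema_alternate_and_discrete (w : ℝ → ℝ) (x : ℝ) (hx : 0 < x)
    (h_rc : ∀ t : ℝ, ContinuousWithinAt w (Ici t) t)
    (h_ll : ∀ t : ℝ, ∃ l : ℝ, Tendsto w (nhdsWithin t (Iio t)) (nhds l))
    (h_cont_extrema : ∀ t₀ : ℝ, IsOneSidedLocalExtremum w t₀ → ContinuousAt w t₀)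
    (h_min_inj : ∀ s t : ℝ, s ≠ t → IsLocalMin w s → IsLocalMin w t → w s ≠ w t)
    (h_max_inj : ∀ s t : ℝ, s ≠ t → IsLocalMax w s → IsLocalMax w t → w s ≠ w t)
    (h_liminf_top : ∀ M : ℝ, ∃ᶠ t in atTop, w t < M)
    (h_limsup_top : ∀ M : ℝ, ∃ᶠ t in atTop, M < w t)
    (h_liminf_bot : ∀ M : ℝ, ∃ᶠ t in atBot, w t < M)
    (h_limsup_bot : ∀ M : ℝ, ∃ᶠ t in atBot, M < w t) :
    (∀ y₁ y₂ : ℝ, y₁ < y₂ → IsXMin w x y₁ → IsXMin w x y₂ →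
      (∀ z ∈ Ioo y₁ y₂, ¬ IsXMin w x z) →
      ∃! z, z ∈ Ioo y₁ y₂ ∧ IsXMax w x z)
    ∧ ∀ p : ℝ, ¬ AccPt p (𝓟 {y : ℝ | IsXMin w x y ∨ IsXMax w x y}) := by
  constructor
  · intro y₁ y₂ h12 h1 h2 hno
    obtain ⟨m, hm, hmax⟩ := xmax_between hx h_rc h_ll h_cont_extrema h_min_inj h12 h1 h2
    refine ⟨m, ⟨hm, hmax⟩, ?_⟩
    rintro z ⟨hz, hzmax⟩
    by_contra hne
    rcases lt_or_gt_of_ne hne with hlt | hgt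
    · obtain ⟨ym, hym, hymmin⟩ :=
        xmin_between hx h_rc h_ll h_cont_extrema h_max_inj hlt hzmax hmax
      exact hno ym ⟨lt_trans hz.1 hym.1, lt_trans hym.2 hm.2⟩ hymmin
    · obtain ⟨ym, hym, hymmin⟩ :=
        xmin_between hx h_rc h_ll h_cont_extrema h_max_inj hgt hmax hzmax
      exact hno ym ⟨lt_trans hm.1 hym.1, lt_trans hym.2 hz.2⟩ hymmin
  · intro p hacc
    rw [accPt_iff_frequently] at hacc
    have hsplit : 𝓝[({p}ᶜ : Set ℝ)] p = 𝓝[<] p ⊔ 𝓝[>] p := by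
      rw [← Iio_union_Ioi, nhdsWithin_union]
    have hacc' : ∃ᶠ y in 𝓝[<] p ⊔ 𝓝[>] p,
        IsXMin w x y ∨ IsXMax w x y := by
      rw [← hsplit]
      exact frequently_nhdsWithin_iff.2 (hacc.mono fun y hy => ⟨hy.2, hy.1⟩)
    have hminpair : ∀ y₁ y₂ : ℝ, y₁ < y₂ → IsXMin w x y₁ → IsXMin w x y₂ →
        ∃ u ∈ Icc y₁ y₂, ∃ v ∈ Icc y₁ y₂, w v + x ≤ w u := by
      intro y₁ y₂ h12 h1 h2
      obtain ⟨⟨u, hu, hw⟩, -⟩ := xmin_pair h_min_inj h12 h1 h2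
      exact ⟨u, hu, y₁, ⟨le_refl y₁, h12.le⟩, hw⟩
    have hmaxpair : ∀ y₁ y₂ : ℝ, y₁ < y₂ → IsXMax w x y₁ → IsXMax w x y₂ →
        ∃ u ∈ Icc y₁ y₂, ∃ v ∈ Icc y₁ y₂, w v + x ≤ w u := by
      intro y₁ y₂ h12 h1 h2
      obtain ⟨⟨u, hu, hw⟩, -⟩ := xmax_pair h_max_inj h12 h1 h2
      exact ⟨y₁, ⟨le_refl y₁, h12.le⟩, u, hu, hw⟩
    rcases Filter.frequently_sup.1 hacc' with hleft | hright
    · obtain ⟨l, hl⟩ := h_ll p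
      rcases Filter.frequently_or_distrib.1 hleft with hmin | hmax
      · exact left_contra hx hl hmin hminpair
      · exact left_contra hx hl hmax hmaxpair
    · rcases Filter.frequently_or_distrib.1 hright with hmin | hmax
      · exact right_contra hx (h_rc p) hmin hminpair
      · exact right_contra hx (h_rc p) hmax hmaxpair
end
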